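/- Let S and S′ be stretches with S′ > S and d(S,S′) = 1. If S is up-admissible for v and S′ is down-admissible for v(S), then S ∪ S′ is down-admissible for v and v(S)[S′] = v[S ∪ S′]. -/

import Mathlib

namespace SL2Tilt

/-- The `i`-th `p`-adic digit of `v`. -/
def dig (p v i : ℕ) : ℕ := v / p ^ i % p

/-- A stretch: a nonempty finite set of consecutive integers. -/
def IsStretch (S : Finset ℕ) : Prop :=
  S.Nonempty ∧ ∀ a ∈ S, ∀ b ∈ S, ∀ c, a ≤ c → c ≤ b → c ∈ S

/-- `S` is down-admissible for `v` (with respect to the prime `p`):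
(d1) the digit of `v` at the minimum of each maximal stretch of `S` is nonzero, and
(d2) if `s ∈ S` and the `(s+1)`-st digit is `0`, then `s + 1 ∈ S`. -/
def DownAdm (p v : ℕ) (S : Finset ℕ) : Prop :=
  (∀ s ∈ S, (s = 0 ∨ s - 1 ∉ S) → dig p v s ≠ 0) ∧
  (∀ s ∈ S, dig p v (s + 1) = 0 → s + 1 ∈ S)

/-- `S` is up-admissible for `v` (with respect to the prime `p`):
(u1) the digit of `v` at the minimum of each maximal stretch of `S` is nonzero, and
(u2) if `s ∈ S` and the `(s+1)`-st digit is `p - 1`, then `s + 1 ∈ S`. -/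
def UpAdm (p v : ℕ) (S : Finset ℕ) : Prop :=
  (∀ s ∈ S, (s = 0 ∨ s - 1 ∉ S) → dig p v s ≠ 0) ∧
  (∀ s ∈ S, dig p v (s + 1) = p - 1 → s + 1 ∈ S)

/-- `v[S] = ∑ᵢ εᵢ aᵢ pⁱ` (εᵢ = -1 for i ∈ S, else 1), as an integer.
All nonzero digits of `v` have index `< v`, so the range `Finset.range v ∪ S` suffices. -/
def vdown (p v : ℕ) (S : Finset ℕ) : ℤ :=
  ∑ i ∈ Finset.range v ∪ S,
    (if i ∈ S then (-1 : ℤ) else 1) * (dig p v i : ℤ) * (p : ℤ) ^ i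

/-- `v(S) = ∑ᵢ aᵢ' pⁱ` where `aᵢ' = -aᵢ` if `i ∈ S`, `aᵢ' = aᵢ + 2` if `i ∉ S` and
`i - 1 ∈ S`, and `aᵢ' = aᵢ` otherwise; as an integer. -/
def vup (p v : ℕ) (S : Finset ℕ) : ℤ :=
  ∑ i ∈ Finset.range v ∪ S ∪ S.image (· + 1),
    (if i ∈ S then -(dig p v i : ℤ)
      else if i - 1 ∈ S then (dig p v i : ℤ) + 2
      else (dig p v i : ℤ)) * (p : ℤ) ^ i

/-- `v[S]` as a natural number. -/
def vdownN (p v : ℕ) (S : Finset ℕ) : ℕ := (vdown p v S).toNat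

/-- `v(S)` as a natural number. -/
def vupN (p v : ℕ) (S : Finset ℕ) : ℕ := (vup p v S).toNat

/-- `fancest' p v s` is `v` with the `p`-adic digits in positions `< s` set to zero.
This is the ancestor `fancest_{s-1}(v)` of the paper: the youngest ancestor of `v`
whose `(s-1)`-st digit is zero (with `fancest' p v 0 = fancest_{-1}(v) = v`). -/
def fancest' (p v s : ℕ) : ℕ := p ^ s * (v / p ^ s)

/-- The scalar `λ_{v,S} = ∏_{s ∈ S} (-1)^(a_s p^s) · fancest_{s-1}(v)[S]± / fancest_s(v)[S]±`. -/
def lam (p v : ℕ) (S : Finset ℕ) : ℚ :=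
  ∏ s ∈ S,
    (-1 : ℚ) ^ (dig p v s * p ^ s) *
      ((vdown p (fancest' p v s) S : ℚ) / (vdown p (fancest' p v (s + 1)) S : ℚ))

/-- The generation of `v` : the number of (matrilineal) ancestors of `v`, i.e. the
number of nonzero `p`-adic digits of `v` minus one. -/
def gen (p v : ℕ) : ℕ :=
  ((Finset.range v).filter (fun i => dig p v i ≠ 0)).card - 1

/-- A minimal down-admissible stretch for `v`: a down-admissible stretch, no proper
nonempty subset of which is down-admissible for `v`. -/
def MinDownStretch (p v : ℕ) (S : Finset ℕ) : Prop :=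
  DownAdm p v S ∧ IsStretch S ∧ ∀ T ⊂ S, T.Nonempty → ¬ DownAdm p v T

/-- A minimal up-admissible stretch for `v`. -/
def MinUpStretch (p v : ℕ) (S : Finset ℕ) : Prop :=
  UpAdm p v S ∧ IsStretch S ∧ ∀ T ⊂ S, T.Nonempty → ¬ UpAdm p v T

/-- `A` and `B` are distant: `d(A,B) > 1`, i.e. `|a - b| > 1` for all `a ∈ A`, `b ∈ B`. -/
def Distant (A B : Finset ℕ) : Prop :=
  ∀ a ∈ A, ∀ b ∈ B, a + 1 < b ∨ b + 1 < a

section Helpers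

variable {p : ℕ}

lemma dig_lt (hp : 2 ≤ p) (v i : ℕ) : dig p v i < p := Nat.mod_lt _ (by omega)

lemma dig_zero_of_ge (hp : 2 ≤ p) {v i : ℕ} (h : v ≤ i) : dig p v i = 0 := by
  have h1 : v < p ^ i := lt_of_lt_of_le (lt_of_le_of_lt h (Nat.lt_two_pow_self (n := i)))
    (Nat.pow_le_pow_left hp i)
  simp [dig, Nat.div_eq_of_lt h1]

lemma digsum (v n : ℕ) :
    ∑ i ∈ Finset.range n, dig p v i * p ^ i = v % p ^ n := by
  induction n with
  | zero => simp [Nat.mod_one]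
  | succ n ih =>
    have e1 : v % p ^ (n+1) % p ^ n = v % p ^ n :=
      Nat.mod_mod_of_dvd v (pow_dvd_pow p (Nat.le_succ n))
    have e2 : v / p ^ n % p = v % p ^ (n+1) / p ^ n := by
      rw [← Nat.mod_mul_right_div_self, ← pow_succ]
    have h1 : v % p ^ (n+1) = p ^ n * (v / p ^ n % p) + v % p ^ n := by
      rw [e2, ← e1]; exact (Nat.div_add_mod _ _).symm
    rw [Finset.sum_range_succ, ih, h1, dig]; ring

lemma mod_pow_le (v : ℕ) {a b : ℕ} (h : a ≤ b) : v % p ^ a ≤ v % p ^ b := by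
  calc v % p ^ a = v % p ^ b % p ^ a := (Nat.mod_mod_of_dvd v (pow_dvd_pow p h)).symm
    _ ≤ v % p ^ b := Nat.mod_le _ _

lemma digsum_Icc (v : ℕ) {a b : ℕ} (h : a ≤ b + 1) :
    ∑ i ∈ Finset.Icc a b, dig p v i * p ^ i = v % p ^ (b+1) - v % p ^ a := by
  have h2 := Finset.sum_Ico_consecutive (fun i => dig p v i * p ^ i)
    (Nat.zero_le a) h
  rw [Nat.Ico_zero_eq_range, Nat.Ico_zero_eq_range, Finset.Ico_add_one_right_eq_Icc] at h2
  simp only [digsum] at h2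
  have h3 : v % p ^ a ≤ v % p ^ (b+1) := mod_pow_le v h
  omega

lemma mod_split (v : ℕ) {a b : ℕ} (h : a ≤ b) :
    v % p ^ b = v % p ^ a + p ^ a * (v / p ^ a % p ^ (b - a)) := by
  have e2 : v / p ^ a % p ^ (b - a) = v % p ^ b / p ^ a := by
    rw [← Nat.mod_mul_right_div_self, ← pow_add, Nat.add_sub_cancel' h]
  have e1 : v % p ^ b % p ^ a = v % p ^ a :=
    Nat.mod_mod_of_dvd v (pow_dvd_pow p h)
  rw [e2, ← e1]
  rw [Nat.add_comm]
  exact (Nat.div_add_mod _ _).symm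

lemma digsum_self (hp : 2 ≤ p) (v : ℕ) :
    ∑ i ∈ Finset.range v, dig p v i * p ^ i = v := by
  rw [digsum]
  exact Nat.mod_eq_of_lt (lt_of_lt_of_le (Nat.lt_two_pow_self (n := v)) (Nat.pow_le_pow_left hp v))

lemma pred_pow_mod (hp : 2 ≤ p) {k : ℕ} (hk : 1 ≤ k) : (p ^ k - 1) % p = p - 1 := by
  obtain ⟨t, ht⟩ : ∃ t, p ^ (k - 1) = t + 1 :=
    ⟨p ^ (k-1) - 1, by have := Nat.one_le_pow (k-1) p (show 0 < p by omega); omega⟩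
  have h1 : p ^ k = p * t + p := by
    calc p ^ k = p * p ^ (k-1) := by rw [← pow_succ']; congr 1; omega
      _ = p * (t + 1) := by rw [ht]
      _ = p * t + p := by ring
  have h3 : p ^ k - 1 = p * t + (p - 1) := by omega
  rw [h3, Nat.mul_add_mod, Nat.mod_eq_of_lt (by omega)]

lemma cast_digsum (v : ℕ) (T : Finset ℕ) :
    ∑ i ∈ T, (dig p v i : ℤ) * (p : ℤ) ^ i
      = ((∑ i ∈ T, dig p v i * p ^ i : ℕ) : ℤ) := by
  push_cast; ring

lemma vdown_eq (hp : 2 ≤ p) (v : ℕ) (T : Finset ℕ) :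
    vdown p v T = (v : ℤ) - 2 * ∑ i ∈ T, (dig p v i : ℤ) * (p : ℤ) ^ i := by
  unfold vdown
  have key : ∀ i : ℕ, (if i ∈ T then (-1 : ℤ) else 1) * (dig p v i : ℤ) * (p : ℤ) ^ i
      = (dig p v i : ℤ) * (p : ℤ) ^ i
        - (if i ∈ T then 2 * ((dig p v i : ℤ) * (p : ℤ) ^ i) else 0) := by
    intro i; by_cases h : i ∈ T <;> simp [h] <;> ring
  simp only [key]
  rw [Finset.sum_sub_distrib, Finset.sum_ite_mem,
    Finset.union_inter_cancel_right, ← Finset.mul_sum]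
  congr 1
  rw [← Finset.sum_subset Finset.subset_union_left (by
    intro x hx h'
    simp only [Finset.mem_range, not_lt] at h'
    rw [dig_zero_of_ge hp h']; simp)]
  rw [cast_digsum, digsum_self hp]

lemma vup_eq (hp : 2 ≤ p) (v m M : ℕ) (hmM : m ≤ M) :
    vup p v (Finset.Icc m M) = (v : ℤ) + 2 * (p : ℤ) ^ (M+1)
      - 2 * ∑ i ∈ Finset.Icc m M, (dig p v i : ℤ) * (p : ℤ) ^ i := by
  set S := Finset.Icc m M with hS
  set D := Finset.range v ∪ S ∪ S.image (· + 1) with hD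
  have key : ∀ i : ℕ, (if i ∈ S then -(dig p v i : ℤ)
      else if i - 1 ∈ S then (dig p v i : ℤ) + 2
      else (dig p v i : ℤ)) * (p : ℤ) ^ i
      = (dig p v i : ℤ) * (p : ℤ) ^ i +
        (if i ∈ S then -(2 * ((dig p v i : ℤ) * (p : ℤ) ^ i))
         else if i - 1 ∈ S then 2 * (p : ℤ) ^ i else 0) := by
    intro i
    by_cases h : i ∈ S
    · simp [h]; ring
    · by_cases h' : i - 1 ∈ S <;> simp [h, h'] <;> ring
  unfold vup
  simp only [key]
  rw [Finset.sum_add_distrib]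
  have hds : ∑ i ∈ D, (dig p v i : ℤ) * (p : ℤ) ^ i = (v : ℤ) := by
    rw [← Finset.sum_subset (show Finset.range v ⊆ D from
      (Finset.subset_union_left).trans Finset.subset_union_left)
      (by
        intro x hx h'
        simp only [Finset.mem_range, not_lt] at h'
        rw [dig_zero_of_ge hp h']; simp)]
    rw [cast_digsum, digsum_self hp]
  rw [hds]
  have hsub : insert (M+1) S ⊆ D := by
    intro x hx
    rcases Finset.mem_insert.1 hx with h | h
    · subst h
      exact Finset.mem_union_right _
        (Finset.mem_image.2 ⟨M, Finset.mem_Icc.2 ⟨hmM, le_refl M⟩, rfl⟩)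
    · exact Finset.mem_union_left _ (Finset.mem_union_right _ h)
  have hzero : ∀ x ∈ D, x ∉ insert (M+1) S →
      (if x ∈ S then -(2 * ((dig p v x : ℤ) * (p : ℤ) ^ x))
       else if x - 1 ∈ S then 2 * (p : ℤ) ^ x else 0) = 0 := by
    intro x _ hx
    simp only [Finset.mem_insert, not_or] at hx
    have hxS : x ∉ S := hx.2
    have hx1 : x - 1 ∉ S := by
      intro hmem
      rw [hS, Finset.mem_Icc] at hmem hxS
      omega
    simp [hxS, hx1]
  rw [← Finset.sum_subset hsub hzero]
  have hMS : M + 1 ∉ S := by rw [hS, Finset.mem_Icc]; omega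
  rw [Finset.sum_insert hMS]
  have hg1 : (if M + 1 ∈ S then -(2 * ((dig p v (M+1) : ℤ) * (p : ℤ) ^ (M+1)))
      else if M + 1 - 1 ∈ S then 2 * (p : ℤ) ^ (M+1) else 0) = 2 * (p : ℤ) ^ (M+1) := by
    have hM : M ∈ S := by rw [hS, Finset.mem_Icc]; omega
    have hM' : M + 1 - 1 ∈ S := by simpa using hM
    simp [hMS, hM', hM]
  rw [hg1]
  have hg2 : ∑ i ∈ S, (if i ∈ S then -(2 * ((dig p v i : ℤ) * (p : ℤ) ^ i))
      else if i - 1 ∈ S then 2 * (p : ℤ) ^ i else 0)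
      = -(2 * ∑ i ∈ S, (dig p v i : ℤ) * (p : ℤ) ^ i) := by
    rw [Finset.mul_sum, ← Finset.sum_neg_distrib]
    exact Finset.sum_congr rfl (fun i hi => by simp [hi])
  rw [hg2]; ring

lemma IsStretch.eq_Icc {S : Finset ℕ} (h : IsStretch S) :
    S = Finset.Icc (S.min' h.1) (S.max' h.1) := by
  ext x
  simp only [Finset.mem_Icc]
  constructor
  · intro hx; exact ⟨S.min'_le x hx, S.le_max' x hx⟩
  · rintro ⟨h1x, h2x⟩
    exact h.2 _ (S.min'_mem h.1) _ (S.max'_mem h.1) x h1x h2x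

end Helpers

/-- For adjacent stretches `S' > S`: if `S` is up-admissible for `v` and `S'` is
down-admissible for `v(S)`, then `S ∪ S'` is down-admissible for `v` and
`v(S)[S'] = v[S ∪ S']`. -/
theorem stmt9 (p v : ℕ) (hp : p.Prime) (hv : 1 ≤ v) (S S' : Finset ℕ)
    (hS : IsStretch S) (hS' : IsStretch S')
    (hlt : ∀ a ∈ S, ∀ b ∈ S', a < b)
    (hadj : ∃ a ∈ S, a + 1 ∈ S')
    (h1 : UpAdm p v S) (h2 : DownAdm p (vupN p v S) S') :
    DownAdm p v (S ∪ S') ∧ vdownN p (vupN p v S) S' = vdownN p v (S ∪ S') := by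
  have hp2 : 2 ≤ p := hp.two_le
  have hne := hS.1
  have hne' := hS'.1
  set m := S.min' hne with hm_def
  set M := S.max' hne with hM_def
  set M' := S'.max' hne' with hM'_def
  have hmM : m ≤ M := S.min'_le _ (S.max'_mem hne)
  have hSeq : S = Finset.Icc m M := hS.eq_Icc
  have hS'eq : S' = Finset.Icc (M+1) M' := by
    rw [hS'.eq_Icc]
    congr 1
    obtain ⟨a, haS, haS'⟩ := hadj
    have h1a : a ≤ M := S.le_max' a haS
    have h2a : M < a + 1 := hlt M (S.max'_mem hne) (a+1) haS'
    have h3a : a = M := by omega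
    have h4 : M + 1 ∈ S' := h3a ▸ haS'
    have h5 : M < S'.min' hne' := hlt M (S.max'_mem hne) _ (S'.min'_mem hne')
    have h6 : S'.min' hne' ≤ M + 1 := S'.min'_le _ h4
    omega
  have hMM' : M + 1 ≤ M' := Finset.nonempty_Icc.1 (hS'eq ▸ hne')
  have hU : S ∪ S' = Finset.Icc m M' := by
    rw [hSeq, hS'eq]
    ext x
    simp only [Finset.mem_union, Finset.mem_Icc]
    omega
  -- digit facts for v
  have hdm : dig p v m ≠ 0 := by
    apply h1.1 m (by rw [hSeq, Finset.mem_Icc]; omega)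
    rcases Nat.eq_zero_or_pos m with h | h
    · exact Or.inl h
    · right; rw [hSeq, Finset.mem_Icc]; omega
  have hdM1 : dig p v (M+1) ≤ p - 2 := by
    have hlt' : dig p v (M+1) < p := dig_lt hp2 v (M+1)
    have hne1 : dig p v (M+1) ≠ p - 1 := by
      intro hcon
      have := h1.2 M (by rw [hSeq, Finset.mem_Icc]; omega) hcon
      rw [hSeq, Finset.mem_Icc] at this; omega
  -- basic quantities
    omega
  have hppos : 0 < p := by omega
  set A := v % p ^ m with hA
  set B := v % p ^ (M+1) with hB
  set C := v % p ^ (M'+1) with hC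
  have hAB : A ≤ B := mod_pow_le v (by omega)
  have hBC : B ≤ C := mod_pow_le v (by omega)
  have hBv : B ≤ v := Nat.mod_le _ _
  have hCv : C ≤ v := Nat.mod_le _ _
  have hAlt : A < p ^ m := Nat.mod_lt _ (pow_pos hppos m)
  have hBlt : B < p ^ (M+1) := Nat.mod_lt _ (pow_pos hppos (M+1))
  have hXlow : A + p ^ m ≤ B := by
    have h0 := mod_split (p := p) v (show m ≤ M + 1 by omega)
    rw [← hA, ← hB] at h0
    set t := v / p ^ m % p ^ (M + 1 - m) with ht
    have ht1 : t % p = dig p v m := by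
      rw [ht, Nat.mod_mod_of_dvd _ (dvd_pow_self p (show M + 1 - m ≠ 0 by omega))]
      rfl
    have ht2 : 1 ≤ t := by
      rcases Nat.eq_zero_or_pos t with h | h
      · rw [h] at ht1; simp at ht1; exact absurd ht1.symm hdm
      · exact h
    have h3 : p ^ m * 1 ≤ p ^ m * t := Nat.mul_le_mul_left _ ht2
    omega
  have hCB : C + 2 * p ^ (M+1) ≤ B + p ^ (M'+1) := by
    have h0 := mod_split (p := p) v (show M + 1 ≤ M' + 1 by omega)
    rw [← hB, ← hC] at h0
    obtain ⟨t, ht⟩ : ∃ t, v / p ^ (M+1) % p ^ (M' + 1 - (M+1)) = t := ⟨_, rfl⟩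
    rw [ht] at h0
    have ht1 : t % p = dig p v (M+1) := by
      rw [← ht, Nat.mod_mod_of_dvd _ (dvd_pow_self p (show M' + 1 - (M+1) ≠ 0 by omega))]
      rfl
    have ht2 : t < p ^ (M' + 1 - (M+1)) := ht ▸ Nat.mod_lt _ (pow_pos hppos _)
    have ht3 : t ≠ p ^ (M' + 1 - (M+1)) - 1 := by
      intro hcon
      rw [hcon, pred_pow_mod hp2 (show 1 ≤ M' + 1 - (M+1) by omega)] at ht1
      omega
    have e : p ^ (M+1) * t + p ^ (M+1) * 2 ≤ p ^ (M'+1) := by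
      calc p ^ (M+1) * t + p ^ (M+1) * 2 = p ^ (M+1) * (t + 2) := by ring
        _ ≤ p ^ (M+1) * p ^ (M' + 1 - (M+1)) := Nat.mul_le_mul_left _ (show t + 2 ≤ p ^ (M' + 1 - (M+1)) by omega)
        _ = p ^ (M'+1) := by rw [← pow_add]; congr 1; omega
    omega
  -- the integer v(S) as a natural number
  set c := 2 * A + 2 * p ^ (M+1) - B with hc
  set w := (v - B) + c with hw
  have hq1 : v - B = p ^ (M+1) * (v / p ^ (M+1)) := by
    have h0 := Nat.div_add_mod v (p ^ (M+1))
    omega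
  have hwZ : (w : ℤ) = (v : ℤ) + 2 * (p : ℤ) ^ (M+1) - 2 * ((B : ℤ) - (A : ℤ)) := by
    have h' : B ≤ 2 * A + 2 * p ^ (M+1) := by omega
    rw [hw, hc]
    push_cast [hBv, h']
    ring
  have hvup : vupN p v S = w := by
    have e2 : ∑ i ∈ Finset.Icc m M, (dig p v i : ℤ) * (p : ℤ) ^ i = ((B - A : ℕ) : ℤ) := by
      rw [cast_digsum, digsum_Icc v (show m ≤ M + 1 by omega)]
    have e1 : vup p v S = (w : ℤ) := by
      rw [hSeq, vup_eq hp2 v m M hmM, e2, hwZ]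
      push_cast [hAB]
      ring
    rw [vupN, e1, Int.toNat_natCast]
  -- mod facts for w
  have hwB : w % p ^ (M+1) = c - p ^ (M+1) := by
    rw [hw, hq1, Nat.mul_add_mod]
    rw [Nat.mod_eq_sub_mod (show p ^ (M+1) ≤ c by omega),
      Nat.mod_eq_of_lt (show c - p ^ (M+1) < p ^ (M+1) by omega)]
  have hq2 : v - C = p ^ (M'+1) * (v / p ^ (M'+1)) := by
    have h0 := Nat.div_add_mod v (p ^ (M'+1))
    omega
  have hwC : w % p ^ (M'+1) = (C - B) + c := by
    have hweq : w = p ^ (M'+1) * (v / p ^ (M'+1)) + ((C - B) + c) := by omega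
    rw [hweq, Nat.mul_add_mod, Nat.mod_eq_of_lt (show (C - B) + c < p ^ (M'+1) by omega)]
  -- high digits of w agree with those of v
  have hdw : ∀ i, M + 2 ≤ i → dig p w i = dig p v i := by
    intro i hi
    have hsplit : v % p ^ (M+2) = B + p ^ (M+1) * dig p v (M+1) := by
      have h0 := mod_split (p := p) v (show M + 1 ≤ M + 2 by omega)
      rw [← hB, show M + 2 - (M+1) = 1 by omega, pow_one] at h0
      exact h0
    have hmodle : v % p ^ (M+2) ≤ v := Nat.mod_le _ _
    set d := dig p v (M+1) with hd
    set q := v / p ^ (M+2) with hqd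
    have hq3 : v = p ^ (M+2) * q + v % p ^ (M+2) := (Nat.div_add_mod v _).symm
    have hr : w = p ^ (M+2) * q + (p ^ (M+1) * d + c) := by omega
    have hrlt : p ^ (M+1) * d + c < p ^ (M+2) := by
      have h1' : p ^ (M+1) * d ≤ p ^ (M+1) * (p - 2) := Nat.mul_le_mul_left _ hdM1
      have h2' : p ^ (M+1) * (p - 2) + 2 * p ^ (M+1) = p ^ (M+2) := by
        calc p ^ (M+1) * (p - 2) + 2 * p ^ (M+1) = p ^ (M+1) * ((p - 2) + 2) := by ring
          _ = p ^ (M+1) * p := by congr 1; omega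
          _ = p ^ (M+2) := (pow_succ p (M+1)).symm
      omega
    have hdiv : w / p ^ (M+2) = q := by
      rw [hr, Nat.mul_add_div (pow_pos hppos _), Nat.div_eq_of_lt hrlt, add_zero]
    unfold dig
    have hip : p ^ i = p ^ (M+2) * p ^ (i - (M+2)) := by
      rw [← pow_add]; congr 1; omega
    rw [hip, ← Nat.div_div_eq_div_mul, ← Nat.div_div_eq_div_mul, hdiv]
  constructor
  · constructor
    · intro s hs hcond
      rw [hU, Finset.mem_Icc] at hs
      have hsm : s = m := by
        rcases hcond with h0 | hnot
        · omega
        · rw [hU, Finset.mem_Icc] at hnot; omega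
      rw [hsm]; exact hdm
    · intro s hs h0
      rw [hU, Finset.mem_Icc] at hs
      rw [hU, Finset.mem_Icc]
      by_cases hsM' : s < M'
      · omega
      · have hs' : s = M' := by omega
        have hM'mem : M' ∈ S' := by rw [hS'eq, Finset.mem_Icc]; omega
        have hd0 : dig p (vupN p v S) (M'+1) = 0 := by
          rw [hvup, hdw (M'+1) (by omega), ← hs']; exact h0
        have := h2.2 M' hM'mem hd0
        rw [hS'eq, Finset.mem_Icc] at this
        omega
  · have hwdig : ∑ i ∈ Finset.Icc (M+1) M', dig p w i * p ^ i = (C - B) + p ^ (M+1) := by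
      rw [digsum_Icc w (show M + 1 ≤ M' + 1 by omega), hwC, hwB]
      omega
    have hvdig : ∑ i ∈ Finset.Icc m M', dig p v i * p ^ i = C - A := by
      rw [digsum_Icc v (show m ≤ M' + 1 by omega)]
    have e1 : vdown p (vupN p v S) S' = (w : ℤ) - 2 * (((C - B) + p ^ (M+1) : ℕ) : ℤ) := by
      rw [hvup, hS'eq, vdown_eq hp2, cast_digsum, hwdig]
    have e2 : vdown p v (S ∪ S') = (v : ℤ) - 2 * ((C - A : ℕ) : ℤ) := by
      rw [hU, vdown_eq hp2, cast_digsum, hvdig]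
    rw [vdownN, vdownN, e1, e2]
    congr 1
    rw [hwZ]
    push_cast [hBC, show A ≤ C from le_trans hAB hBC, hAB]
    ring


end SL2Tilt
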